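/- Let T = {γ ∈ ℝ^n : γ_i < 0 for all i, Σ_{i=1}^n γ_i > −1} and f(γ) = ½ Σ_{i=1}^n γ_i log(−γ_i) − ½ (1 + Σ_{j=1}^n γ_j) log(1 + Σ_{j=1}^n γ_j). Then for every point s in the frontier ∂T = closure(T) \ T and every C > 0 there exists δ > 0 such that for all γ ∈ T with ‖γ − s‖ < δ one has ‖∇f(γ)‖ ≥ C. (The covector df has arbitrarily large length near the boundary ∂T.) -/

import Mathlib

/-!
Up to the factor `1/2`, `f` is `∑ φ(γᵢ) - φ(1 + ∑ γⱼ)` with `φ t = t log |t|`, so the `j`-th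
partial derivative of `f` is `(log |γⱼ| - log (1 + ∑ γᵢ)) / 2`. A frontier point `s` of `T` has
`sⱼ ≤ 0` and `∑ sᵢ ≥ -1` with equality somewhere, and exactly one of the two quantities
`sⱼ`, `1 + ∑ sᵢ` vanishes for a suitable `j`: either `1 + ∑ sᵢ = 0` and some `sⱼ ≠ 0`, or
`1 + ∑ sᵢ > 0` and some `sⱼ = 0`. In either case one logarithm tends to `-∞` while the other
stays bounded, so that partial derivative, and with it `‖∇f‖`, blows up near `s`.
-/

open scoped BigOperators

/-- The open cell `T = {γ ∈ ℝⁿ : γᵢ < 0, ∑ γᵢ > −1}`, inside Euclidean space. -/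
def openCellT (n : ℕ) : Set (EuclideanSpace ℝ (Fin n)) :=
  {γ | (∀ i, γ i < 0) ∧ -1 < ∑ i, γ i}

/-- The potential `f` of the T-dual Lagrangian `L(O(−1), h_{−1})`. -/
noncomputable def potentialF (n : ℕ) (γ : EuclideanSpace ℝ (Fin n)) : ℝ :=
  (1 / 2) * ∑ i, γ i * Real.log (-γ i)
    - (1 / 2) * (1 + ∑ j, γ j) * Real.log (1 + ∑ j, γ j)

open Filter Topology Real

theorem tendsto_abs_log_sub_log_atTop {α : Type*} {l : Filter α} {u v : α → ℝ} {b : ℝ}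
    (hu : Tendsto u l (𝓝[≠] 0)) (hv : Tendsto v l (𝓝 b)) (hb : b ≠ 0) :
    Tendsto (fun x => |log (u x) - log (v x)|) l atTop :=
  tendsto_abs_atBot_atTop.comp <| by
    simpa only [sub_eq_add_neg, Function.comp_apply] using
      (tendsto_log_nhdsNE_zero.comp hu).atBot_add ((continuousAt_log hb).tendsto.comp hv).neg

theorem Continuous.tendsto_nhdsWithin_nhdsNE_zero {X Y : Type*} [TopologicalSpace X]
    [TopologicalSpace Y] [Zero Y] {w : X → Y} (hw : Continuous w) {t : Set X}
    (ht : ∀ x ∈ t, w x ≠ 0) {x₀ : X} (hx₀ : w x₀ = 0) :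
    Tendsto w (𝓝[t] x₀) (𝓝[≠] 0) :=
  tendsto_nhdsWithin_iff.2
    ⟨hx₀ ▸ hw.continuousWithinAt.tendsto, eventually_nhdsWithin_of_forall ht⟩

/-- `Real.log` is even, so `log (γ j)` here is the `log (-γ j)` of `potentialF`. -/
noncomputable def potentialGradient (n : ℕ) (γ : EuclideanSpace ℝ (Fin n)) :
    EuclideanSpace ℝ (Fin n) :=
  WithLp.toLp 2 fun j => (log (γ j) - log (1 + ∑ i, γ i)) / 2

theorem hasGradientAt_potentialF {n : ℕ} {γ : EuclideanSpace ℝ (Fin n)}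
    (hγ : ∀ i, γ i ≠ 0) (hsum : 1 + ∑ i, γ i ≠ 0) :
    HasGradientAt (potentialF n) (potentialGradient n γ) γ := by
  let proj (i : Fin n) : EuclideanSpace ℝ (Fin n) →L[ℝ] ℝ := EuclideanSpace.proj i
  have hcoord (i : Fin n) : HasFDerivAt (fun x : EuclideanSpace ℝ (Fin n) => x i) (proj i) γ :=
    (proj i).hasFDerivAt
  have hmass : HasFDerivAt (fun x : EuclideanSpace ℝ (Fin n) => 1 + ∑ i, x i) (∑ i, proj i) γ :=
    (HasFDerivAt.fun_sum fun i _ => hcoord i).const_add 1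
  have hentropy := (HasFDerivAt.fun_sum (u := Finset.univ) fun i _ =>
      (hasDerivAt_mul_log (hγ i)).comp_hasFDerivAt γ (hcoord i)).sub
    ((hasDerivAt_mul_log hsum).comp_hasFDerivAt γ hmass)
  rw [hasGradientAt_iff_hasFDerivAt]
  refine ((hentropy.mul_const (1 / 2 : ℝ)).congr_of_eventuallyEq (.of_eq ?_)).congr_fderiv ?_
  · funext x
    simp only [potentialF, log_neg_eq_log, Function.comp_apply, Pi.sub_apply]
    ring
  · ext v
    simp only [potentialGradient, proj, InnerProductSpace.toDual_apply_apply, PiLp.inner_apply,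
      RCLike.inner_apply, conj_trivial, smul_apply, sub_apply,
      sum_apply, PiLp.proj_apply, smul_eq_mul, Finset.mul_sum,
      ← Finset.sum_sub_distrib]
    exact Finset.sum_congr rfl fun i _ => by ring

theorem norm_potentialGradient_ge {n : ℕ} (γ : EuclideanSpace ℝ (Fin n)) (j : Fin n) :
    |log (γ j) - log (1 + ∑ i, γ i)| / 2 ≤ ‖potentialGradient n γ‖ := by
  simpa [potentialGradient, abs_div] using PiLp.norm_apply_le (potentialGradient n γ) j

theorem closure_openCellT_subset (n : ℕ) :
    closure (openCellT n) ⊆ {γ | (∀ i, γ i ≤ 0) ∧ -1 ≤ ∑ i, γ i} := by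
  refine closure_minimal (fun γ hγ => ⟨fun i => (hγ.1 i).le, hγ.2.le⟩) ?_
  simp only [Set.ofPred_and, Set.ofPred_forall]
  exact (isClosed_iInter fun i => isClosed_le (by fun_prop) continuous_const).inter
    (isClosed_le continuous_const (by fun_prop))

theorem exists_of_mem_closure_diff_openCellT {n : ℕ} {s : EuclideanSpace ℝ (Fin n)}
    (hs : s ∈ closure (openCellT n) \ openCellT n) :
    ∃ j, (s j = 0 ∧ 1 + ∑ i, s i ≠ 0) ∨ (s j ≠ 0 ∧ 1 + ∑ i, s i = 0) := by
  obtain ⟨hcl, hnot⟩ := hs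
  obtain ⟨hle, hsum⟩ := closure_openCellT_subset n hcl
  by_cases hedge : 1 + ∑ i, s i = 0
  · obtain ⟨j, -, hj⟩ := Finset.exists_ne_zero_of_sum_ne_zero (s := Finset.univ) (f := fun i => s i)
      (by linarith)
    exact ⟨j, .inr ⟨hj, hedge⟩⟩
  · obtain ⟨j, hj⟩ : ∃ j, s j = 0 := by
      by_contra! h
      exact hnot ⟨fun i => (hle i).lt_of_ne (h i), by contrapose! hedge; linarith⟩
    exact ⟨j, .inl ⟨hj, hedge⟩⟩

theorem tendsto_norm_gradient_potentialF {n : ℕ} {s : EuclideanSpace ℝ (Fin n)}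
    (hs : s ∈ closure (openCellT n) \ openCellT n) :
    Tendsto (fun γ => ‖gradient (potentialF n) γ‖) (𝓝[openCellT n] s) atTop := by
  obtain ⟨j, hj⟩ := exists_of_mem_closure_diff_openCellT hs
  have hcoord_cont : Continuous fun γ : EuclideanSpace ℝ (Fin n) => γ j := by fun_prop
  have hmass_cont : Continuous fun γ : EuclideanSpace ℝ (Fin n) => 1 + ∑ i, γ i := by fun_prop
  have hcoord_ne (γ) (hγ : γ ∈ openCellT n) : γ j ≠ 0 := (hγ.1 j).ne
  have hmass_ne (γ) (hγ : γ ∈ openCellT n) : 1 + ∑ i, γ i ≠ 0 := by linarith [hγ.2]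
  have hlog : Tendsto (fun γ => |log (γ j) - log (1 + ∑ i, γ i)|) (𝓝[openCellT n] s) atTop := by
    rcases hj with ⟨hsj, hmass_s⟩ | ⟨hsj, hmass_s⟩
    · exact tendsto_abs_log_sub_log_atTop
        (hcoord_cont.tendsto_nhdsWithin_nhdsNE_zero hcoord_ne hsj)
        hmass_cont.continuousWithinAt.tendsto hmass_s
    · simpa only [abs_sub_comm] using tendsto_abs_log_sub_log_atTop
        (hmass_cont.tendsto_nhdsWithin_nhdsNE_zero hmass_ne hmass_s)
        hcoord_cont.continuousWithinAt.tendsto hsj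
  refine tendsto_atTop_mono' _ (eventually_nhdsWithin_of_forall fun γ hγ => ?_)
    (hlog.atTop_div_const two_pos)
  dsimp only
  rw [(hasGradientAt_potentialF (fun i => (hγ.1 i).ne) (hmass_ne γ hγ)).gradient]
  exact norm_potentialGradient_ge γ j

theorem stmt_8_general (n : ℕ)
    (s : EuclideanSpace ℝ (Fin n)) (hs : s ∈ closure (openCellT n) \ openCellT n) :
    ∀ C : ℝ, 0 < C → ∃ δ : ℝ, 0 < δ ∧
      ∀ γ ∈ openCellT n, ‖γ - s‖ < δ → C ≤ ‖gradient (potentialF n) γ‖ := by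
  intro C _
  obtain ⟨δ, hδ, hball⟩ := Metric.mem_nhdsWithin_iff.1
    ((tendsto_norm_gradient_potentialF hs).eventually_ge_atTop C)
  exact ⟨δ, hδ, fun γ hγ hnear => hball ⟨by rwa [Metric.mem_ball, dist_eq_norm], hγ⟩⟩

theorem stmt_8 (n : ℕ) (hn : 1 ≤ n)
    (s : EuclideanSpace ℝ (Fin n)) (hs : s ∈ closure (openCellT n) \ openCellT n) :
    ∀ C : ℝ, 0 < C → ∃ δ : ℝ, 0 < δ ∧
      ∀ γ ∈ openCellT n, ‖γ - s‖ < δ → C ≤ ‖gradient (potentialF n) γ‖ :=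
  stmt_8_general n s hs
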